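/- arXiv:2410.01101 — 2 statements merged into one kernel-verified Lean document; each statement's English description precedes it below -/
import Mathlib

section
/- Let $f^\star, \hat f:\mathcal{X}\times\mathcal{Y}_1\times\cdots\times\mathcal{Y}_W\to\mathbb{R}$ each admit a standardized interaction-rank-$K$ decomposition with sub-functions $\{g_{j_1,\dots,j_k}\}$ and $\{\hat g_{j_1,\dots,j_k}\}$ respectively (standardized with respect to distributions $x\sim p$, $y_i\sim p_i(\cdot|x)$ sampled independently given $x$). Suppose $\mathbb{E}_{x\sim p,\,y_i\sim p_i(\cdot|x)\,\forall i}\big[(f^\star-\hat f)(x,y_1,\dots,y_W)^2\big]\le\epsilon$. Then for every $0\le k\le K-1$ and every $1\le j_1<\cdots<j_k\le W$, writing $\Delta_{j_1,\dots,j_k}=g_{j_1,\dots,j_k}-\hat g_{j_1,\dots,j_k}$, we have $\mathbb{E}_{x\sim p,\,y_{j_l}\sim p_{j_l}(\cdot|x)\,\forall l}\big[\Delta_{j_1,\dots,j_k}(x,y_{j_1},\dots,y_{j_k})^2\big]\le 2^k\epsilon$. -/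
open Finset

/-- Key orthogonality lemma: if `A` does not depend on coordinate `j` and `B` has zero
conditional mean in coordinate `j` (w.r.t. weights `q j`), then the weighted sum of
`A * B` over the full product space vanishes. -/
private lemma ortho_aux {W : ℕ} (Y : Fin W → Type*) [∀ i, Fintype (Y i)]
    (q : (i : Fin W) → Y i → ℝ) (j : Fin W) [Nonempty (Y j)]
    (A B : ((i : Fin W) → Y i) → ℝ)
    (hA : ∀ y v, A (Function.update y j v) = A y)
    (hB : ∀ y, ∑ v, q j v * B (Function.update y j v) = 0) :
    ∑ y : (i : Fin W) → Y i, (∏ i, q i (y i)) * (A y * B y) = 0 := by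
  classical
  set e := Equiv.piSplitAt j Y with he
  have key : ∀ (w : (i : {i // i ≠ j}) → Y i) (v v0 : Y j),
      e.symm (v, w) = Function.update (e.symm (v0, w)) j v := by
    intro w v v0
    funext i
    by_cases h : i = j
    · subst h
      simp [he, Equiv.piSplitAt]
    · simp [he, Equiv.piSplitAt, h, Function.update_of_ne h]
  rw [← Equiv.sum_comp e.symm, Fintype.sum_prod_type, Finset.sum_comm]
  apply Finset.sum_eq_zero
  intro w _
  obtain ⟨v0⟩ := ‹Nonempty (Y j)›
  set z := e.symm (v0, w) with hz
  calc ∑ v, (∏ i, q i ((e.symm (v, w)) i)) * (A (e.symm (v, w)) * B (e.symm (v, w)))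
      = ∑ v, ((∏ i ∈ Finset.univ.erase j, q i (z i)) * A z) *
          (q j v * B (Function.update z j v)) := by
        apply Finset.sum_congr rfl
        intro v _
        have h1 : ∏ i, q i ((e.symm (v, w)) i)
            = q j ((e.symm (v, w)) j) * ∏ i ∈ Finset.univ.erase j, q i ((e.symm (v, w)) i) :=
          (Finset.mul_prod_erase Finset.univ _ (Finset.mem_univ j)).symm
        have h2 : (e.symm (v, w)) j = v := by simp [he, Equiv.piSplitAt]
        have h3 : ∏ i ∈ Finset.univ.erase j, q i ((e.symm (v, w)) i)
            = ∏ i ∈ Finset.univ.erase j, q i (z i) := by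
          apply Finset.prod_congr rfl
          intro i hi
          rw [key w v v0, Function.update_of_ne (Finset.ne_of_mem_erase hi), ← hz]
        have h4 : A (e.symm (v, w)) = A z := by rw [key w v v0, ← hz, hA]
        have h5 : B (e.symm (v, w)) = B (Function.update z j v) := by rw [key w v v0, ← hz]
        rw [h1, h2, h3, h4, h5]
        ring
    _ = 0 := by rw [← Finset.mul_sum, hB z, mul_zero]

/-- Sub-function alignment: if `f⋆` and `f̂` have standardized IR-`K` decompositions and their
in-distribution squared error is at most `ε`, then each pair of corresponding sub-functions
indexed by a set `S` with `|S| = k < K` has squared error at most `2^k ε`. -/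
theorem subfunction_alignment
    {X : Type*} [Fintype X] {W K : ℕ} (Y : Fin W → Type*) [∀ i, Fintype (Y i)]
    (p0 : X → ℝ) (p : (i : Fin W) → X → Y i → ℝ)
    (hp0 : ∀ x, 0 ≤ p0 x) (hp0sum : ∑ x, p0 x = 1)
    (hp : ∀ i x v, 0 ≤ p i x v) (hpsum : ∀ i x, ∑ v, p i x v = 1)
    (fstar fhat : X → ((i : Fin W) → Y i) → ℝ)
    (g ghat : (S : Finset (Fin W)) → X → ((i : {i // i ∈ S}) → Y i.1) → ℝ)
    (ε : ℝ)
    (hdec : ∀ x y, fstar x y =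
      ∑ S ∈ Finset.univ.filter (fun S : Finset (Fin W) => S.card < K),
        g S x (fun i => y i.1))
    (hdechat : ∀ x y, fhat x y =
      ∑ S ∈ Finset.univ.filter (fun S : Finset (Fin W) => S.card < K),
        ghat S x (fun i => y i.1))
    (hstd : ∀ (S : Finset (Fin W)) (j : Fin W) (hj : j ∈ S) (x : X)
        (y : (i : {i // i ∈ S}) → Y i.1),
      ∑ v : Y j, p j x v * g S x (Function.update y ⟨j, hj⟩ v) = 0)
    (hstdhat : ∀ (S : Finset (Fin W)) (j : Fin W) (hj : j ∈ S) (x : X)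
        (y : (i : {i // i ∈ S}) → Y i.1),
      ∑ v : Y j, p j x v * ghat S x (Function.update y ⟨j, hj⟩ v) = 0)
    (herr : ∑ x, p0 x * ∑ y : (i : Fin W) → Y i,
        (∏ i, p i x (y i)) * (fstar x y - fhat x y) ^ 2 ≤ ε) :
    ∀ S : Finset (Fin W), S.card < K →
      ∑ x, p0 x * ∑ y : (i : Fin W) → Y i,
          (∏ i, p i x (y i)) *
            (g S x (fun i => y i.1) - ghat S x (fun i => y i.1)) ^ 2
        ≤ 2 ^ S.card * ε := by
  classical
  intro S0 hS0
  set filt := Finset.univ.filter (fun S : Finset (Fin W) => S.card < K) with hfilt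
  set D : Finset (Fin W) → X → ((i : Fin W) → Y i) → ℝ :=
    fun S x y => g S x (fun i => y i.1) - ghat S x (fun i => y i.1) with hD
  -- restriction commutes with update
  have hrestrict : ∀ (T : Finset (Fin W)) (j : Fin W) (hj : j ∈ T)
      (y : (i : Fin W) → Y i) (v : Y j),
      (fun i : {i // i ∈ T} => (Function.update y j v) i.1)
        = Function.update (fun i : {i // i ∈ T} => y i.1) ⟨j, hj⟩ v := by
    intro T j hj y v
    funext i
    by_cases h : i = ⟨j, hj⟩
    · subst h
      simp
    · have h' : (i : Fin W) ≠ j := fun hc => h (Subtype.ext hc)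
      rw [Function.update_of_ne h', Function.update_of_ne h]
  -- Δ component has zero conditional mean in each of its coordinates:
  have hDstd : ∀ (T : Finset (Fin W)) (j : Fin W), j ∈ T → ∀ (x : X)
      (y : (i : Fin W) → Y i),
      ∑ v, p j x v * D T x (Function.update y j v) = 0 := by
    intro T j hj x y
    have : ∀ v, D T x (Function.update y j v)
        = g T x (Function.update (fun i : {i // i ∈ T} => y i.1) ⟨j, hj⟩ v)
          - ghat T x (Function.update (fun i : {i // i ∈ T} => y i.1) ⟨j, hj⟩ v) := by
      intro v
      simp only [hD, hrestrict T j hj y v]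
    simp only [this, mul_sub, Finset.sum_sub_distrib, hstd T j hj x, hstdhat T j hj x,
      sub_zero]
  -- Δ component does not depend on coordinates outside its index set:
  have hDconst : ∀ (T : Finset (Fin W)) (j : Fin W), j ∉ T → ∀ (x : X)
      (y : (i : Fin W) → Y i) (v : Y j),
      D T x (Function.update y j v) = D T x y := by
    intro T j hj x y v
    have : (fun i : {i // i ∈ T} => (Function.update y j v) i.1)
        = fun i : {i // i ∈ T} => y i.1 := by
      funext i
      have h' : (i : Fin W) ≠ j := fun hc => hj (hc ▸ i.2)
      rw [Function.update_of_ne h']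
    simp only [hD, this]
  -- cross terms vanish
  have hcross : ∀ (x : X) (S T : Finset (Fin W)), S ≠ T →
      ∑ y : (i : Fin W) → Y i, (∏ i, p i x (y i)) * (D S x y * D T x y) = 0 := by
    intro x S T hST
    -- find a coordinate in the symmetric difference
    have : (∃ j, j ∈ T ∧ j ∉ S) ∨ (∃ j, j ∈ S ∧ j ∉ T) := by
      by_contra h
      push_neg at h
      exact hST (Finset.Subset.antisymm (fun a ha => h.2 a ha) (fun a ha => h.1 a ha))
    have hne : ∀ (j : Fin W), Nonempty (Y j) := by
      intro j
      by_contra h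
      rw [not_nonempty_iff] at h
      have h0 := hpsum j x
      rw [Finset.univ_eq_empty, Finset.sum_empty] at h0
      norm_num at h0
    rcases this with ⟨j, hjT, hjS⟩ | ⟨j, hjS, hjT⟩
    · haveI := hne j
      exact ortho_aux Y (fun i => p i x) j (D S x) (D T x)
        (fun y v => hDconst S j hjS x y v) (fun y => hDstd T j hjT x y)
    · haveI := hne j
      have := ortho_aux Y (fun i => p i x) j (D T x) (D S x)
        (fun y v => hDconst T j hjT x y v) (fun y => hDstd S j hjS x y)
      calc ∑ y : (i : Fin W) → Y i, (∏ i, p i x (y i)) * (D S x y * D T x y)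
          = ∑ y : (i : Fin W) → Y i, (∏ i, p i x (y i)) * (D T x y * D S x y) := by
            apply Finset.sum_congr rfl; intro y _; ring
        _ = 0 := this
  -- pointwise (in x) Parseval identity
  have hpars : ∀ x : X,
      ∑ y : (i : Fin W) → Y i, (∏ i, p i x (y i)) * (fstar x y - fhat x y) ^ 2
        = ∑ S ∈ filt, ∑ y : (i : Fin W) → Y i, (∏ i, p i x (y i)) * (D S x y) ^ 2 := by
    intro x
    have hdiff : ∀ y, fstar x y - fhat x y = ∑ S ∈ filt, D S x y := by
      intro y
      rw [hdec x y, hdechat x y, ← Finset.sum_sub_distrib]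
    calc ∑ y : (i : Fin W) → Y i, (∏ i, p i x (y i)) * (fstar x y - fhat x y) ^ 2
        = ∑ y : (i : Fin W) → Y i, ∑ S ∈ filt, ∑ T ∈ filt,
            (∏ i, p i x (y i)) * (D S x y * D T x y) := by
          apply Finset.sum_congr rfl
          intro y _
          rw [hdiff y, sq, Finset.sum_mul_sum, Finset.mul_sum]
          exact Finset.sum_congr rfl fun S _ => Finset.mul_sum _ _ _
      _ = ∑ S ∈ filt, ∑ T ∈ filt, ∑ y : (i : Fin W) → Y i,
            (∏ i, p i x (y i)) * (D S x y * D T x y) := by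
          rw [Finset.sum_comm]
          exact Finset.sum_congr rfl fun S _ => Finset.sum_comm
      _ = ∑ S ∈ filt, ∑ y : (i : Fin W) → Y i, (∏ i, p i x (y i)) * (D S x y) ^ 2 := by
          apply Finset.sum_congr rfl
          intro S hS
          rw [Finset.sum_eq_single_of_mem S hS]
          · exact Finset.sum_congr rfl fun y _ => by rw [sq]
          · intro T _ hTS
            exact hcross x S T (fun h => hTS h.symm)
  -- sum version
  have htotal : ∑ S ∈ filt, ∑ x, p0 x * ∑ y : (i : Fin W) → Y i,
      (∏ i, p i x (y i)) * (D S x y) ^ 2 ≤ ε := by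
    calc ∑ S ∈ filt, ∑ x, p0 x * ∑ y : (i : Fin W) → Y i,
          (∏ i, p i x (y i)) * (D S x y) ^ 2
        = ∑ x, ∑ S ∈ filt, p0 x * ∑ y : (i : Fin W) → Y i,
            (∏ i, p i x (y i)) * (D S x y) ^ 2 := Finset.sum_comm
      _ = ∑ x, p0 x * ∑ y : (i : Fin W) → Y i,
            (∏ i, p i x (y i)) * (fstar x y - fhat x y) ^ 2 := by
          apply Finset.sum_congr rfl
          intro x _
          rw [hpars x, Finset.mul_sum]
      _ ≤ ε := herr
  have hterm_nonneg : ∀ S : Finset (Fin W), 0 ≤ ∑ x, p0 x * ∑ y : (i : Fin W) → Y i,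
      (∏ i, p i x (y i)) * (D S x y) ^ 2 := by
    intro S
    apply Finset.sum_nonneg
    intro x _
    apply mul_nonneg (hp0 x)
    apply Finset.sum_nonneg
    intro y _
    exact mul_nonneg (Finset.prod_nonneg fun i _ => hp i x (y i)) (sq_nonneg _)
  have hS0f : S0 ∈ filt := by
    simp [hfilt, hS0]
  have hle : ∑ x, p0 x * ∑ y : (i : Fin W) → Y i,
      (∏ i, p i x (y i)) * (D S0 x y) ^ 2 ≤ ε :=
    le_trans (Finset.single_le_sum (fun S _ => hterm_nonneg S) hS0f) htotal
  have hε : 0 ≤ ε := le_trans (hterm_nonneg S0) hle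
  have h2 : (1 : ℝ) ≤ 2 ^ S0.card := one_le_pow₀ (by norm_num)
  calc ∑ x, p0 x * ∑ y : (i : Fin W) → Y i,
        (∏ i, p i x (y i)) *
          (g S0 x (fun i => y i.1) - ghat S0 x (fun i => y i.1)) ^ 2
      = ∑ x, p0 x * ∑ y : (i : Fin W) → Y i,
          (∏ i, p i x (y i)) * (D S0 x y) ^ 2 := rfl
    _ ≤ ε := hle
    _ ≤ 2 ^ S0.card * ε := le_mul_of_one_le_left hε h2
end

section
/- (No-regret regularized policy gradient.) Fix a finite set $\mathcal{Y}$, a fully-supported reference distribution $\nu\in\Delta(\mathcal{Y})$, loss functions $l^1,\dots,l^T:\mathcal{Y}\to[0,B]$, and parameters $\eta,\lambda>0$. Initialize $p^1=\nu$ and iterate $p^{t+1}=\arg\min_{p\in\Delta(\mathcal{Y})}\big[-\langle l^t,p\rangle + \lambda\chi^2(p,\nu)+\tfrac1\eta D(p,p^t)\big]$, where $D$ is the Bregman divergence of $\chi^2(\cdot,\nu)$. Then for every $\mu\in\Delta(\mathcal{Y})$: $\sum_{t=1}^T\langle l^t,\mu-p^t\rangle + \lambda\sum_{t=1}^{T+1}\chi^2(p^t,\nu)\le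 (T\lambda+\tfrac1\eta)\chi^2(\mu,\nu)+\tfrac{\eta T B^2}{4}$. -/
/-!
Each update minimises over the simplex a quadratic `Φ` whose second-order part is
`(λ + 1/η) D`, so the minimiser satisfies the three-point inequality
`Φ(pᵗ⁺¹) + (λ + 1/η) D(μ, pᵗ⁺¹) ≤ Φ(μ)`. Writing `⟨lᵗ, μ - pᵗ⟩ = ⟨lᵗ, μ - pᵗ⁺¹⟩ + ⟨lᵗ, pᵗ⁺¹ - pᵗ⟩`
and bounding the second term by AM-GM, `⟨lᵗ, pᵗ⁺¹ - pᵗ⟩ ≤ (1/η) D(pᵗ⁺¹, pᵗ) + η B² / 4`,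
gives a one-step bound in which the terms `(1/η) D(μ, pᵗ)` telescope.
-/

open Finset Filter Topology

/-- In the paper's notation, `χ²(p, ν) = chiSqDist ν p ν` and `D(p, p') = chiSqDist ν p p'`. -/
noncomputable def chiSqDist {Y : Type*} [Fintype Y] (ν a b : Y → ℝ) : ℝ :=
  ∑ y, (a y - b y) ^ 2 / ν y

section ChiSqDist

variable {Y : Type*} [Fintype Y]

lemma chiSqDist_nonneg {ν : Y → ℝ} (hν : ∀ y, 0 ≤ ν y) (a b : Y → ℝ) :
    0 ≤ chiSqDist ν a b :=
  sum_nonneg fun y _ => div_nonneg (sq_nonneg _) (hν y)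

@[simp]
lemma chiSqDist_self (ν a : Y → ℝ) : chiSqDist ν a a = 0 := by
  simp [chiSqDist]

lemma chiSqDist_add_smul_sub (ν x z b : Y → ℝ) (s : ℝ) :
    chiSqDist ν (x + s • (z - x)) b
      = chiSqDist ν x b + s * ∑ y, 2 * (x y - b y) * (z y - x y) / ν y
        + s ^ 2 * chiSqDist ν z x := by
  simp only [chiSqDist, mul_sum, ← sum_add_distrib]
  refine sum_congr rfl fun y _ => ?_
  simp only [Pi.add_apply, Pi.smul_apply, Pi.sub_apply, smul_eq_mul]
  ring

lemma sum_mul_add_smul_sub (l x z : Y → ℝ) (s : ℝ) :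
    ∑ y, l y * (x + s • (z - x)) y = ∑ y, l y * x y + s * ∑ y, l y * (z y - x y) := by
  simp only [mul_sum, ← sum_add_distrib]
  refine sum_congr rfl fun y _ => ?_
  simp only [Pi.add_apply, Pi.smul_apply, Pi.sub_apply, smul_eq_mul]
  ring

lemma sum_mul_sub_le_chiSqDist {ν l : Y → ℝ} {B η : ℝ} (hν : ∀ y, 0 < ν y)
    (hνsum : ∑ y, ν y = 1) (hη : 0 < η) (hl : ∀ y, 0 ≤ l y ∧ l y ≤ B) (a b : Y → ℝ) :
    ∑ y, l y * (a y - b y) ≤ (1 / η) * chiSqDist ν a b + η * B ^ 2 / 4 := by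
  have hpoint : ∀ y, l y * (a y - b y)
      ≤ (1 / η) * ((a y - b y) ^ 2 / ν y) + η * B ^ 2 / 4 * ν y := by
    intro y
    have hην : 0 < η * ν y := mul_pos hη (hν y)
    have hlB : l y ^ 2 ≤ B ^ 2 := pow_le_pow_left₀ (hl y).1 (hl y).2 2
    have hsplit : (1 / η) * ((a y - b y) ^ 2 / ν y) + η * B ^ 2 / 4 * ν y - l y * (a y - b y)
        = (a y - b y - η * ν y * l y / 2) ^ 2 / (η * ν y) + η * ν y * (B ^ 2 - l y ^ 2) / 4 := by
      have := (hν y).ne'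
      have := hη.ne'
      field_simp
      ring
    have h₁ : 0 ≤ (a y - b y - η * ν y * l y / 2) ^ 2 / (η * ν y) :=
      div_nonneg (sq_nonneg _) hην.le
    have h₂ : 0 ≤ η * ν y * (B ^ 2 - l y ^ 2) / 4 := by
      have := sub_nonneg.2 hlB
      positivity
    linarith
  calc ∑ y, l y * (a y - b y)
      ≤ ∑ y, ((1 / η) * ((a y - b y) ^ 2 / ν y) + η * B ^ 2 / 4 * ν y) :=
        sum_le_sum fun y _ => hpoint y
    _ = (1 / η) * chiSqDist ν a b + η * B ^ 2 / 4 := by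
        rw [sum_add_distrib, ← mul_sum, ← mul_sum, hνsum, mul_one, chiSqDist]

end ChiSqDist

lemma nonneg_of_forall_mul_add_sq_mul_nonneg {g A : ℝ}
    (h : ∀ s, 0 < s → s ≤ 1 → 0 ≤ s * g + s ^ 2 * A) : 0 ≤ g := by
  have hlim : Tendsto (fun s : ℝ => g + s * A) (𝓝[>] 0) (𝓝 g) := by
    have hcont : Continuous fun s : ℝ => g + s * A := by fun_prop
    simpa using (hcont.tendsto 0).mono_left nhdsWithin_le_nhds
  refine ge_of_tendsto hlim ?_
  filter_upwards [Ioc_mem_nhdsGT (zero_lt_one' ℝ)] with s ⟨hs0, hs1⟩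
  have := h s hs0 hs1
  rw [show s * g + s ^ 2 * A = s * (g + s * A) by ring] at this
  exact (mul_nonneg_iff_of_pos_left hs0).1 this

/-- Three-point inequality. -/
lemma IsMinOn.add_le_of_quadratic_segment {E : Type*} [AddCommGroup E] [Module ℝ E]
    {S : Set E} {F : E → ℝ} {x z : E} {g A : ℝ} (hS : Convex ℝ S) (hx : x ∈ S) (hz : z ∈ S)
    (hmin : IsMinOn F S x) (hF : ∀ s : ℝ, F (x + s • (z - x)) = F x + s * g + s ^ 2 * A) :
    F x + A ≤ F z := by
  have hg : 0 ≤ g := nonneg_of_forall_mul_add_sq_mul_nonneg (A := A) fun s hs0 hs1 => by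
    have := isMinOn_iff.1 hmin _ (hS.add_smul_sub_mem hx hz ⟨hs0.le, hs1⟩)
    linarith [hF s]
  have hz' : F z = F x + g + A := by simpa using hF 1
  linarith

section Step

variable {Y : Type*} [Fintype Y]

noncomputable def regObjective (ν l π : Y → ℝ) (lam η : ℝ) (q : Y → ℝ) : ℝ :=
  -∑ y, l y * q y + lam * chiSqDist ν q ν + (1 / η) * chiSqDist ν q π

lemma regObjective_add_smul_sub (ν l π : Y → ℝ) (lam η : ℝ) (x z : Y → ℝ) (s : ℝ) :
    regObjective ν l π lam η (x + s • (z - x))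
      = regObjective ν l π lam η x
        + s * (-∑ y, l y * (z y - x y) + lam * ∑ y, 2 * (x y - ν y) * (z y - x y) / ν y
          + (1 / η) * ∑ y, 2 * (x y - π y) * (z y - x y) / ν y)
        + s ^ 2 * ((lam + 1 / η) * chiSqDist ν z x) := by
  simp only [regObjective, sum_mul_add_smul_sub, chiSqDist_add_smul_sub]
  ring

lemma regObjective_add_chiSqDist_le {ν l π x z : Y → ℝ} {lam η : ℝ}
    (hmin : IsMinOn (regObjective ν l π lam η) (stdSimplex ℝ Y) x)
    (hx : x ∈ stdSimplex ℝ Y) (hz : z ∈ stdSimplex ℝ Y) :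
    regObjective ν l π lam η x + (lam + 1 / η) * chiSqDist ν z x
      ≤ regObjective ν l π lam η z :=
  hmin.add_le_of_quadratic_segment (convex_stdSimplex ℝ Y) hx hz
    (regObjective_add_smul_sub ν l π lam η x z)

lemma regret_step_le {ν l π x μ : Y → ℝ} {B η lam : ℝ} (hν : ∀ y, 0 < ν y)
    (hνsum : ∑ y, ν y = 1) (hη : 0 < η) (hlam : 0 ≤ lam) (hl : ∀ y, 0 ≤ l y ∧ l y ≤ B)
    (hmin : IsMinOn (regObjective ν l π lam η) (stdSimplex ℝ Y) x)
    (hx : x ∈ stdSimplex ℝ Y) (hμ : μ ∈ stdSimplex ℝ Y) :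
    ∑ y, l y * (μ y - π y) + lam * chiSqDist ν x ν
      ≤ lam * chiSqDist ν μ ν + η * B ^ 2 / 4
        + ((1 / η) * chiSqDist ν μ π - (1 / η) * chiSqDist ν μ x) := by
  have hthree := regObjective_add_chiSqDist_le hmin hx hμ
  have hamgm := sum_mul_sub_le_chiSqDist hν hνsum hη hl x π
  have hfar : 0 ≤ lam * chiSqDist ν μ x :=
    mul_nonneg hlam (chiSqDist_nonneg (fun y => (hν y).le) μ x)
  simp only [regObjective, mul_sub, sum_sub_distrib] at hthree hamgm ⊢
  linarith

end Step

lemma sum_Icc_add_sum_Icc_succ_le {r c e : ℕ → ℝ} {K : ℝ} (T : ℕ)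
    (h : ∀ t ∈ Icc 1 T, r t + c (t + 1) ≤ K + (e t - e (t + 1))) :
    ∑ t ∈ Icc 1 T, r t + ∑ t ∈ Icc 1 (T + 1), c t ≤ c 1 + T * K + (e 1 - e (T + 1)) := by
  induction T with
  | zero => simp
  | succ T ih =>
    have ih' := ih fun t ht => h t (Icc_subset_Icc_right T.le_succ ht)
    have hlast := h (T + 1) (right_mem_Icc.2 (by omega))
    rw [sum_Icc_succ_top (by omega), sum_Icc_succ_top (by omega : 1 ≤ T + 1 + 1)]
    push_cast
    linarith

theorem no_regret_regularized_policy_gradient_general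
    {Y : Type*} [Fintype Y]
    (ν : Y → ℝ) (hν : ∀ y, 0 < ν y) (hνsum : ∑ y, ν y = 1)
    (T : ℕ) (B η lam : ℝ) (hη : 0 < η) (hlam : 0 < lam)
    (l : ℕ → Y → ℝ) (hl : ∀ t ∈ Finset.Icc 1 T, ∀ y, 0 ≤ l t y ∧ l t y ≤ B)
    (p : ℕ → Y → ℝ)
    (hp1 : p 1 = ν)
    (hsimplex : ∀ t ∈ Finset.Icc 1 (T + 1), (∀ y, 0 ≤ p t y) ∧ ∑ y, p t y = 1)
    (hupdate : ∀ t ∈ Finset.Icc 1 T, ∀ q : Y → ℝ, (∀ y, 0 ≤ q y) → (∑ y, q y = 1) →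
      (-∑ y, l t y * p (t + 1) y) + lam * ∑ y, (p (t + 1) y - ν y) ^ 2 / ν y
          + (1 / η) * ∑ y, (p (t + 1) y - p t y) ^ 2 / ν y
        ≤ (-∑ y, l t y * q y) + lam * ∑ y, (q y - ν y) ^ 2 / ν y
          + (1 / η) * ∑ y, (q y - p t y) ^ 2 / ν y)
    (μ : Y → ℝ) (hμ : ∀ y, 0 ≤ μ y) (hμsum : ∑ y, μ y = 1) :
    (∑ t ∈ Finset.Icc 1 T, ∑ y, l t y * (μ y - p t y))
        + lam * ∑ t ∈ Finset.Icc 1 (T + 1), ∑ y, (p t y - ν y) ^ 2 / ν y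
      ≤ ((T : ℝ) * lam + 1 / η) * (∑ y, (μ y - ν y) ^ 2 / ν y)
        + η * T * B ^ 2 / 4 := by
  have hstep : ∀ t ∈ Icc 1 T,
      ∑ y, l t y * (μ y - p t y) + lam * chiSqDist ν (p (t + 1)) ν
        ≤ lam * chiSqDist ν μ ν + η * B ^ 2 / 4
          + ((1 / η) * chiSqDist ν μ (p t) - (1 / η) * chiSqDist ν μ (p (t + 1))) := by
    intro t ht
    have hsucc : t + 1 ∈ Icc 1 (T + 1) := by simp only [mem_Icc] at ht ⊢; omega
    exact regret_step_le hν hνsum hη hlam.le (hl t ht)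
      (isMinOn_iff.2 fun q hq => hupdate t ht q hq.1 hq.2) (hsimplex _ hsucc) ⟨hμ, hμsum⟩
  have hsum := sum_Icc_add_sum_Icc_succ_le (r := fun t => ∑ y, l t y * (μ y - p t y))
    (c := fun t => lam * chiSqDist ν (p t) ν) (e := fun t => (1 / η) * chiSqDist ν μ (p t)) T hstep
  have hlast : 0 ≤ (1 / η) * chiSqDist ν μ (p (T + 1)) :=
    mul_nonneg (one_div_pos.2 hη).le (chiSqDist_nonneg (fun y => (hν y).le) _ _)
  rw [hp1, chiSqDist_self, ← mul_sum] at hsum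
  change _ + lam * ∑ t ∈ Icc 1 (T + 1), chiSqDist ν (p t) ν
    ≤ ((T : ℝ) * lam + 1 / η) * chiSqDist ν μ ν + η * T * B ^ 2 / 4
  linarith

/-- No-regret guarantee for chi-squared–regularized policy gradient (mirror descent):
for iterates `p¹ = ν` and
`p^{t+1} = argmin_{p ∈ Δ(Y)} [-⟨lᵗ,p⟩ + λ χ²(p,ν) + (1/η) D(p,pᵗ)]`,
every comparator `μ ∈ Δ(Y)` satisfies
`∑_{t=1}^T ⟨lᵗ, μ - pᵗ⟩ + λ ∑_{t=1}^{T+1} χ²(pᵗ,ν) ≤ (Tλ + 1/η) χ²(μ,ν) + ηTB²/4`. -/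
theorem no_regret_regularized_policy_gradient
    {Y : Type*} [Fintype Y]
    (ν : Y → ℝ) (hν : ∀ y, 0 < ν y) (hνsum : ∑ y, ν y = 1)
    (T : ℕ) (B η lam : ℝ) (hB : 0 ≤ B) (hη : 0 < η) (hlam : 0 < lam)
    (l : ℕ → Y → ℝ) (hl : ∀ t ∈ Finset.Icc 1 T, ∀ y, 0 ≤ l t y ∧ l t y ≤ B)
    (p : ℕ → Y → ℝ)
    (hp1 : p 1 = ν)
    (hsimplex : ∀ t ∈ Finset.Icc 1 (T + 1), (∀ y, 0 ≤ p t y) ∧ ∑ y, p t y = 1)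
    (hupdate : ∀ t ∈ Finset.Icc 1 T, ∀ q : Y → ℝ, (∀ y, 0 ≤ q y) → (∑ y, q y = 1) →
      (-∑ y, l t y * p (t + 1) y) + lam * ∑ y, (p (t + 1) y - ν y) ^ 2 / ν y
          + (1 / η) * ∑ y, (p (t + 1) y - p t y) ^ 2 / ν y
        ≤ (-∑ y, l t y * q y) + lam * ∑ y, (q y - ν y) ^ 2 / ν y
          + (1 / η) * ∑ y, (q y - p t y) ^ 2 / ν y)
    (μ : Y → ℝ) (hμ : ∀ y, 0 ≤ μ y) (hμsum : ∑ y, μ y = 1) :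
    (∑ t ∈ Finset.Icc 1 T, ∑ y, l t y * (μ y - p t y))
        + lam * ∑ t ∈ Finset.Icc 1 (T + 1), ∑ y, (p t y - ν y) ^ 2 / ν y
      ≤ ((T : ℝ) * lam + 1 / η) * (∑ y, (μ y - ν y) ^ 2 / ν y)
        + η * T * B ^ 2 / 4 :=
  no_regret_regularized_policy_gradient_general ν hν hνsum T B η lam hη hlam l hl p hp1 hsimplex
    hupdate μ hμ hμsum
end
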